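/- arXiv:math/0601020 — 3 statements merged into one kernel-verified Lean document; each statement's English description precedes it below -/
import Mathlib

section
/- Let A be a 3×3 hermitian matrix with quaternion entries, i.e. A = (a_{ij}) with a_{ij} ∈ ℍ and a_{ji} = conj(a_{ij}) for all i,j = 1,2,3 (so the diagonal entries are real). Then both quaternions det₁A := a₁₁a₂₂a₃₃ − a₁₂a₂₁a₃₃ − a₁₃a₂₂a₃₁ − a₁₁a₂₃a₃₂ + a₁₃(a₃₂a₂₁) + (a₁₂a₂₃)a₃₁ and det₂A := a₁₁a₂₂a₃₃ − a₁₂a₂₁a₃₃ − a₁₃a₂₂a₃₁ − a₁₁a₂₃a₃₂ + a₃₁(a₂₃a₁₂) + (a₂₁a₃₂)a₁₃ are real, i.e. they lie in the copy of ℝ inside the quaternions ℍ. -/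
/-!
The diagonal entries `x, y, z` of a hermitian quaternion matrix are real, hence central.
Writing `b = a₁₂, c = a₁₃, d = a₂₃`, both determinants have the shape
`x y z - b b̄ z - c y c̄ - x d d̄ + e + ē`; each summand, and the pair `e + ē`, is
self-adjoint in any star ring once `x` and `z` are central, and a self-adjoint quaternion is real.
-/

open scoped Quaternion

/-- The first real-valued Weierstrass determinant of a 3×3 hermitian quaternion matrix. -/
noncomputable def det1 (a : Fin 3 → Fin 3 → ℍ[ℝ]) : ℍ[ℝ] :=
  a 0 0 * a 1 1 * a 2 2 - a 0 1 * a 1 0 * a 2 2 - a 0 2 * a 1 1 * a 2 0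
    - a 0 0 * a 1 2 * a 2 1 + a 0 2 * (a 2 1 * a 1 0) + (a 0 1 * a 1 2) * a 2 0

/-- The second real-valued Weierstrass determinant of a 3×3 hermitian quaternion matrix. -/
noncomputable def det2 (a : Fin 3 → Fin 3 → ℍ[ℝ]) : ℍ[ℝ] :=
  a 0 0 * a 1 1 * a 2 2 - a 0 1 * a 1 0 * a 2 2 - a 0 2 * a 1 1 * a 2 0
    - a 0 0 * a 1 2 * a 2 1 + a 2 0 * (a 1 2 * a 0 1) + (a 1 0 * a 2 1) * a 0 2

theorem isSelfAdjoint_hermitian_det_expansion {R : Type*} [Ring R] [StarRing R] {x y z : R}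
    (hx : IsSelfAdjoint x) (hy : IsSelfAdjoint y) (hz : IsSelfAdjoint z)
    (hx_comm : ∀ p, Commute x p) (hz_comm : ∀ p, Commute z p) (b c d e : R) :
    IsSelfAdjoint (x * y * z - b * star b * z - c * y * star c - x * d * star d + e + star e) := by
  have hxy : IsSelfAdjoint (x * y) := (hx.commute_iff hy).mp (hx_comm y)
  have hxyz : IsSelfAdjoint (x * y * z) := (hxy.commute_iff hz).mp (hz_comm _).symm
  have hbz : IsSelfAdjoint (b * star b * z) :=
    ((IsSelfAdjoint.mul_star_self b).commute_iff hz).mp (hz_comm _).symm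
  have hxd : IsSelfAdjoint (x * d * star d) := by
    rw [mul_assoc]
    exact (hx.commute_iff (.mul_star_self d)).mp (hx_comm _)
  rw [add_assoc]
  exact (((hxyz.sub hbz).sub (hy.conjugate c)).sub hxd).add (.add_star_self e)

theorem Quaternion.commute_of_isSelfAdjoint {R : Type*} [CommRing R] [NoZeroDivisors R]
    [CharZero R] {q : ℍ[R]} (hq : IsSelfAdjoint q) (p : ℍ[R]) : Commute q p := by
  rw [Quaternion.star_eq_self.mp hq]
  exact Quaternion.coe_commute _ _

theorem isSelfAdjoint_det1 (a : Fin 3 → Fin 3 → ℍ[ℝ]) (ha : ∀ i j, a j i = star (a i j)) :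
    IsSelfAdjoint (det1 a) := by
  have hdiag (i : Fin 3) : IsSelfAdjoint (a i i) := (ha i i).symm
  have hE : a 0 1 * a 1 2 * star (a 0 2) = star (a 0 2 * (star (a 1 2) * star (a 0 1))) := by
    simp only [star_mul, star_star, mul_assoc]
  rw [det1, ha 0 1, ha 0 2, ha 1 2, hE]
  exact isSelfAdjoint_hermitian_det_expansion (hdiag 0) (hdiag 1) (hdiag 2)
    (Quaternion.commute_of_isSelfAdjoint (hdiag 0)) (Quaternion.commute_of_isSelfAdjoint (hdiag 2))
    _ _ _ _

theorem isSelfAdjoint_det2 (a : Fin 3 → Fin 3 → ℍ[ℝ]) (ha : ∀ i j, a j i = star (a i j)) :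
    IsSelfAdjoint (det2 a) := by
  have hdiag (i : Fin 3) : IsSelfAdjoint (a i i) := (ha i i).symm
  have hE : star (a 0 1) * star (a 1 2) * a 0 2 = star (star (a 0 2) * (a 1 2 * a 0 1)) := by
    simp only [star_mul, star_star, mul_assoc]
  rw [det2, ha 0 1, ha 0 2, ha 1 2, hE]
  exact isSelfAdjoint_hermitian_det_expansion (hdiag 0) (hdiag 1) (hdiag 2)
    (Quaternion.commute_of_isSelfAdjoint (hdiag 0)) (Quaternion.commute_of_isSelfAdjoint (hdiag 2))
    _ _ _ _

/-- For a 3×3 hermitian quaternion matrix, both `det1` and `det2` are real, i.e. lie in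
the canonical copy of ℝ inside ℍ. -/
theorem statement0 (a : Fin 3 → Fin 3 → ℍ[ℝ])
    (ha : ∀ i j, a j i = star (a i j)) :
    (∃ r : ℝ, det1 a = (r : ℍ[ℝ])) ∧ (∃ r : ℝ, det2 a = (r : ℍ[ℝ])) :=
  ⟨⟨_, Quaternion.star_eq_self.mp (isSelfAdjoint_det1 a ha)⟩,
    ⟨_, Quaternion.star_eq_self.mp (isSelfAdjoint_det2 a ha)⟩⟩
end

section
/- For x = (x¹,…,x⁵) ∈ ℝ⁵ let A(x) be the real symmetric trace-free 3×3 matrix A(x) = [[x⁵ − √3·x⁴, √3·x³, √3·x²], [√3·x³, x⁵ + √3·x⁴, √3·x¹], [√3·x², √3·x¹, −2x⁵]], and let Υ_{IJK} (I,J,K = 1,…,5) be the totally symmetric tensor defined by Υ_{IJK} x^I x^J x^K = (1/2)·det A(x). Then Υ satisfies: (i) Υ_{IJK} = Υ_{(IJK)}; (ii) Σ_J Υ_{IJJ} = 0 for all I; (iii) Σ_I (Υ_{JKI}Υ_{LMI} + Υ_{LJI}Υ_{KMI} + Υ_{KLI}Υ_{JMI}) = δ_{JK}δ_{LM} + δ_{LJ}δ_{KM}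 + δ_{KL}δ_{JM} for all J,K,L,M. -/
/-!
A symmetric 3-tensor is determined by its cubic form (polarization), so `Υ` must be the explicit
tensor `upsilon` read off from `½ det A(x)`. The entries of `2Υ` lie in `ℤ[√3]`, so trace-freeness
and the quadratic identity are finitely many identities in `ℤ[√3]`, which are decided by
computation and then transported to `ℝ` along the ring map sending `√3` to `Real.sqrt 3`.
-/

open Matrix

/-- The generic real symmetric trace-free 3×3 matrix parametrized by `x ∈ ℝ⁵`
(indices: `x 0 = x¹, …, x 4 = x⁵`). -/
noncomputable def A5 (x : Fin 5 → ℝ) : Matrix (Fin 3) (Fin 3) ℝ :=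
  !![x 4 - Real.sqrt 3 * x 3, Real.sqrt 3 * x 2, Real.sqrt 3 * x 1;
     Real.sqrt 3 * x 2, x 4 + Real.sqrt 3 * x 3, Real.sqrt 3 * x 0;
     Real.sqrt 3 * x 1, Real.sqrt 3 * x 0, -2 * x 4]

section Trilinear

variable {ι R : Type*} [Fintype ι] [CommRing R]

def trilinear (T : ι → ι → ι → R) (x y z : ι → R) : R :=
  ∑ a, ∑ b, ∑ c, T a b c * x a * y b * z c

lemma trilinear_add_left (T : ι → ι → ι → R) (x x' y z : ι → R) :
    trilinear T (x + x') y z = trilinear T x y z + trilinear T x' y z := by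
  simp only [trilinear, Pi.add_apply, mul_add, add_mul, Finset.sum_add_distrib]

lemma trilinear_add_middle (T : ι → ι → ι → R) (x y y' z : ι → R) :
    trilinear T x (y + y') z = trilinear T x y z + trilinear T x y' z := by
  simp only [trilinear, Pi.add_apply, mul_add, add_mul, Finset.sum_add_distrib]

lemma trilinear_add_right (T : ι → ι → ι → R) (x y z z' : ι → R) :
    trilinear T x y (z + z') = trilinear T x y z + trilinear T x y z' := by
  simp only [trilinear, Pi.add_apply, mul_add, Finset.sum_add_distrib]

lemma trilinear_sub (T S : ι → ι → ι → R) (x y z : ι → R) :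
    trilinear (T - S) x y z = trilinear T x y z - trilinear S x y z := by
  simp only [trilinear, Pi.sub_apply, sub_mul, Finset.sum_sub_distrib]

lemma trilinear_comm12 {T : ι → ι → ι → R} (hT : ∀ i j k, T i j k = T j i k) (x y z : ι → R) :
    trilinear T x y z = trilinear T y x z := by
  rw [trilinear, Finset.sum_comm]
  refine Finset.sum_congr rfl fun b _ => Finset.sum_congr rfl fun a _ =>
    Finset.sum_congr rfl fun c _ => ?_
  rw [hT a b c]; ring

lemma trilinear_comm23 {T : ι → ι → ι → R} (hT : ∀ i j k, T i j k = T i k j) (x y z : ι → R) :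
    trilinear T x y z = trilinear T x z y := by
  refine Finset.sum_congr rfl fun a _ => ?_
  rw [Finset.sum_comm]
  refine Finset.sum_congr rfl fun c _ => Finset.sum_congr rfl fun b _ => ?_
  rw [hT a b c]; ring

lemma trilinear_single [DecidableEq ι] (T : ι → ι → ι → R) (i j k : ι) :
    trilinear T (Pi.single i 1) (Pi.single j 1) (Pi.single k 1) = T i j k := by
  simp [trilinear, Pi.single_apply]

end Trilinear

section Polarization

variable {ι K : Type*} [Fintype ι] [Field K] [CharZero K]

lemma eq_zero_of_trilinear_diag_eq_zero {T : ι → ι → ι → K}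
    (h12 : ∀ i j k, T i j k = T j i k) (h23 : ∀ i j k, T i j k = T i k j)
    (hT : ∀ x, trilinear T x x x = 0) : T = 0 := by
  classical
  ext i j k
  set x : ι → K := Pi.single i 1
  set y : ι → K := Pi.single j 1
  set z : ι → K := Pi.single k 1
  have hxyz := hT (x + y + z)
  have hxy := hT (x + y)
  have hxz := hT (x + z)
  have hyz := hT (y + z)
  simp only [trilinear_add_left, trilinear_add_middle, trilinear_add_right] at hxyz hxy hxz hyz
  rw [Pi.zero_apply, Pi.zero_apply, Pi.zero_apply, ← trilinear_single T i j k]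
  -- polarization: `6 T(x,y,z) = C(x+y+z) - C(x+y) - C(x+z) - C(y+z) + C(x) + C(y) + C(z)`
  linear_combination (hxyz - hxy - hxz - hyz + hT x + hT y + hT z
    + 3 * trilinear_comm23 h23 x y z + 2 * trilinear_comm12 h12 x y z
    + trilinear_comm23 h23 y x z + 2 * trilinear_comm12 h12 x z y
    + trilinear_comm23 h23 z x y) / 6

lemma eq_of_trilinear_diag_eq {T S : ι → ι → ι → K}
    (hT12 : ∀ i j k, T i j k = T j i k) (hT23 : ∀ i j k, T i j k = T i k j)
    (hS12 : ∀ i j k, S i j k = S j i k) (hS23 : ∀ i j k, S i j k = S i k j)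
    (h : ∀ x, trilinear T x x x = trilinear S x x x) : T = S :=
  sub_eq_zero.mp <| eq_zero_of_trilinear_diag_eq_zero
    (fun i j k => by simp only [Pi.sub_apply, hT12 i j k, hS12 i j k])
    (fun i j k => by simp only [Pi.sub_apply, hT23 i j k, hS23 i j k])
    (fun x => by rw [trilinear_sub, h, sub_self])

end Polarization

open Zsqrtd

def twiceUpsilon : Fin 5 → Fin 5 → Fin 5 → ℤ√3 :=
  ![![![0, 0, 0, sqrtd, -1],
      ![0, 0, sqrtd, 0, 0],
      ![0, sqrtd, 0, 0, 0],
      ![sqrtd, 0, 0, 0, 0],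
      ![-1, 0, 0, 0, 0]],
    ![![0, 0, sqrtd, 0, 0],
      ![0, 0, 0, -sqrtd, -1],
      ![sqrtd, 0, 0, 0, 0],
      ![0, -sqrtd, 0, 0, 0],
      ![0, -1, 0, 0, 0]],
    ![![0, sqrtd, 0, 0, 0],
      ![sqrtd, 0, 0, 0, 0],
      ![0, 0, 0, 0, 2],
      ![0, 0, 0, 0, 0],
      ![0, 0, 2, 0, 0]],
    ![![sqrtd, 0, 0, 0, 0],
      ![0, -sqrtd, 0, 0, 0],
      ![0, 0, 0, 0, 0],
      ![0, 0, 0, 0, 2],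
      ![0, 0, 0, 2, 0]],
    ![![-1, 0, 0, 0, 0],
      ![0, -1, 0, 0, 0],
      ![0, 0, 2, 0, 0],
      ![0, 0, 0, 2, 0],
      ![0, 0, 0, 0, -2]]]

lemma twiceUpsilon_comm12 : ∀ I J K, twiceUpsilon I J K = twiceUpsilon J I K := by decide

lemma twiceUpsilon_comm23 : ∀ I J K, twiceUpsilon I J K = twiceUpsilon I K J := by decide

lemma sum_twiceUpsilon_diag : ∀ I, ∑ J, twiceUpsilon I J J = 0 := by decide

lemma twiceUpsilon_quadratic : ∀ J K L M,
    ∑ I, (twiceUpsilon J K I * twiceUpsilon L M I + twiceUpsilon L J I * twiceUpsilon K M I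
      + twiceUpsilon K L I * twiceUpsilon J M I) =
    4 * ((if J = K then 1 else 0) * (if L = M then 1 else 0)
      + (if L = J then 1 else 0) * (if K = M then 1 else 0)
      + (if K = L then 1 else 0) * (if J = M then 1 else 0)) := by
  decide

noncomputable def sqrtThreeHom : ℤ√3 →+* ℝ :=
  Zsqrtd.lift ⟨√3, by norm_num⟩

lemma sqrtThreeHom_sqrtd : sqrtThreeHom sqrtd = √3 := by
  simp [sqrtThreeHom]

noncomputable def upsilon (I J K : Fin 5) : ℝ := sqrtThreeHom (twiceUpsilon I J K) / 2

lemma trilinear_upsilon (x : Fin 5 → ℝ) : trilinear upsilon x x x = 1 / 2 * (A5 x).det := by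
  have h2 : √3 ^ 2 = 3 := Real.sq_sqrt (by norm_num)
  have h3 : √3 ^ 3 = 3 * √3 := by rw [pow_succ, h2]
  simp only [trilinear, Fin.sum_univ_five, upsilon, twiceUpsilon, A5, det_fin_three, of_apply,
    cons_val', cons_val_zero, cons_val_one, cons_val_two, cons_val_three, cons_val_four,
    head_cons, tail_cons, empty_val', cons_val_fin_one, head_fin_const,
    map_zero, map_one, map_neg, map_ofNat, sqrtThreeHom_sqrtd]
  ring_nf
  simp only [h2, h3]
  ring

/-- The totally symmetric tensor `Υ` on `ℝ⁵` with `Υ_{IJK}x^Ix^Jx^K = ½ det A(x)`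
satisfies total symmetry (i), trace-freeness (ii), and the quadratic identity (iii). -/
theorem statement2 (Υ : Fin 5 → Fin 5 → Fin 5 → ℝ)
    (hsym1 : ∀ I J K, Υ I J K = Υ J I K)
    (hsym2 : ∀ I J K, Υ I J K = Υ I K J)
    (hdef : ∀ x : Fin 5 → ℝ,
      (∑ I, ∑ J, ∑ K, Υ I J K * x I * x J * x K) = (1 / 2) * (A5 x).det) :
    ((∀ I J K, Υ I J K = Υ J I K) ∧ (∀ I J K, Υ I J K = Υ I K J)) ∧
    (∀ I, ∑ J, Υ I J J = 0) ∧
    (∀ J K L M, (∑ I, (Υ J K I * Υ L M I + Υ L J I * Υ K M I + Υ K L I * Υ J M I)) =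
      (if J = K then (1 : ℝ) else 0) * (if L = M then (1 : ℝ) else 0)
      + (if L = J then (1 : ℝ) else 0) * (if K = M then (1 : ℝ) else 0)
      + (if K = L then (1 : ℝ) else 0) * (if J = M then (1 : ℝ) else 0)) := by
  have hΥ : Υ = upsilon := eq_of_trilinear_diag_eq hsym1 hsym2
    (fun I J K => by simp only [upsilon, twiceUpsilon_comm12 I J K])
    (fun I J K => by simp only [upsilon, twiceUpsilon_comm23 I J K])
    (fun x => (hdef x).trans (trilinear_upsilon x).symm)
  subst hΥ
  refine ⟨⟨hsym1, hsym2⟩, fun I => ?_, fun J K L M => ?_⟩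
  · simp only [upsilon, ← Finset.sum_div, ← map_sum, sum_twiceUpsilon_diag, map_zero, zero_div]
  · have h := congrArg sqrtThreeHom (twiceUpsilon_quadratic J K L M)
    simp only [map_sum, map_add, map_mul, map_ofNat, apply_ite sqrtThreeHom, map_one,
      map_zero] at h
    simp only [upsilon, div_mul_div_comm, ← add_div, ← Finset.sum_div, h]
    ring
end

section
/- Let Υ_{IJK} be a totally symmetric rank-3 tensor on ℝⁿ, and let Γ_{MJI} be a rank-3 tensor such that for every fixed I, the matrix X^{(I)} with entries X^{(I)}_{MJ} = Γ_{MJI} satisfies the stabilizer identity Σ_M [X^{(I)}_{MJ}Υ_{MKL} + X^{(I)}_{MK}Υ_{JML} + X^{(I)}_{ML}Υ_{JKM}] = 0 for all J,K,L (i.e. each X^{(I)} lies in the annihilator Lie algebra of Υ). Then Υ'(Γ) = 0, where Υ'(Γ)_{IJKL} = 12·Γ_{M(JI}Υ_{KL)M} is the total symmetrization over I,J,K,L of Γ_{M(JI}Υ_{KL)M}. -/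
/-! The twelve terms of `Υ'(Γ)_{IJKL}` split into four groups of three, each of which is the
stabilizer identity for one of the matrices `X^{(I)}, X^{(J)}, X^{(K)}, X^{(L)}`. -/

open Finset

variable {ι R : Type*} [Fintype ι] [CommSemiring R]

/-- The infinitesimal action of the matrix `X` on the rank-3 tensor `Υ`, whose vanishing is the
stabilizer identity. -/
def tensorAction (X : ι → ι → R) (Υ : ι → ι → ι → R) (J K L : ι) : R :=
  ∑ M, (X M J * Υ M K L + X M K * Υ J M L + X M L * Υ J K M)

theorem sum_twelve_eq_sum_tensorAction (Υ Γ : ι → ι → ι → R) (I J K L : ι) :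
    (∑ M, (Γ M J I * Υ M K L + Γ M K I * Υ J M L + Γ M L I * Υ J K M
         + Γ M I J * Υ M K L + Γ M K J * Υ I M L + Γ M L J * Υ I K M
         + Γ M I K * Υ M J L + Γ M J K * Υ I M L + Γ M L K * Υ I J M
         + Γ M I L * Υ M J K + Γ M J L * Υ I M K + Γ M K L * Υ I J M)) =
      tensorAction (fun M N => Γ M N I) Υ J K L + tensorAction (fun M N => Γ M N J) Υ I K L
        + tensorAction (fun M N => Γ M N K) Υ I J L + tensorAction (fun M N => Γ M N L) Υ I J K := by
  simp only [tensorAction, ← sum_add_distrib]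
  exact sum_congr rfl fun M _ => by ring

theorem statement13_general (n : ℕ) (Υ Γ : Fin n → Fin n → Fin n → ℝ)
    (hstab : ∀ I J K L,
      (∑ M, (Γ M J I * Υ M K L + Γ M K I * Υ J M L + Γ M L I * Υ J K M)) = 0) :
    ∀ I J K L,
      (∑ M, (Γ M J I * Υ M K L + Γ M K I * Υ J M L + Γ M L I * Υ J K M
           + Γ M I J * Υ M K L + Γ M K J * Υ I M L + Γ M L J * Υ I K M
           + Γ M I K * Υ M J L + Γ M J K * Υ I M L + Γ M L K * Υ I J M
           + Γ M I L * Υ M J K + Γ M J L * Υ I M K + Γ M K L * Υ I J M)) = 0 := by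
  intro I J K L
  rw [sum_twelve_eq_sum_tensorAction]
  simp only [tensorAction, hstab, add_zero]

/-- If, for every fixed third index `I`, the matrix `X^{(I)}_{MJ} = Γ_{MJI}` lies in the
stabilizer Lie algebra of the totally symmetric tensor `Υ`, then
`Υ'(Γ)_{IJKL} = 12·Γ_{M(JI}Υ_{KL)M}` vanishes, i.e. `𝔥⊗ℝⁿ ⊆ ker Υ'`. -/
theorem statement13 (n : ℕ) (Υ Γ : Fin n → Fin n → Fin n → ℝ)
    (hsym1 : ∀ I J K, Υ I J K = Υ J I K)
    (hsym2 : ∀ I J K, Υ I J K = Υ I K J)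
    (hstab : ∀ I J K L,
      (∑ M, (Γ M J I * Υ M K L + Γ M K I * Υ J M L + Γ M L I * Υ J K M)) = 0) :
    ∀ I J K L,
      (∑ M, (Γ M J I * Υ M K L + Γ M K I * Υ J M L + Γ M L I * Υ J K M
           + Γ M I J * Υ M K L + Γ M K J * Υ I M L + Γ M L J * Υ I K M
           + Γ M I K * Υ M J L + Γ M J K * Υ I M L + Γ M L K * Υ I J M
           + Γ M I L * Υ M J K + Γ M J L * Υ I M K + Γ M K L * Υ I J M)) = 0 :=
  statement13_general n Υ Γ hstab
end
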